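/- arXiv:1505.07993 — 6 statements merged into one kernel-verified Lean document; each statement's English description precedes it below -/
import Mathlib

section
/- Let ψ̂ : ℝ → ℝ be differentiable, let μ̂ : ℝ → ℝ, and let ĥ : ℝ × ℝ³ → ℝ³. Suppose the dissipation inequality (ψ̂'(u) − μ̂(u))·v + ĥ(u,g)·g ≤ 0 holds for all u, v ∈ ℝ and all g ∈ ℝ³. Then μ̂(u) = ψ̂'(u) for every u ∈ ℝ, and the residual inequality ĥ(u,g)·g ≤ 0 holds for all u ∈ ℝ and g ∈ ℝ³. -/
open Matrix

theorem eq_zero_of_forall_mul_add_nonpos {𝕜 : Type*} [Field 𝕜] [LinearOrder 𝕜]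
    [IsStrictOrderedRing 𝕜] {a b : 𝕜} (hab : ∀ v, a * v + b ≤ 0) : a = 0 := by
  by_contra ha
  have h := hab ((1 - b) / a)
  rw [mul_div_cancel₀ _ ha] at h
  linarith

theorem dissipation_forces_state_equation_and_residual_general
    (ψ : ℝ → ℝ)
    (μ : ℝ → ℝ) (h : ℝ × (Fin 3 → ℝ) → Fin 3 → ℝ)
    (hdiss : ∀ (u v : ℝ) (g : Fin 3 → ℝ),
      (deriv ψ u - μ u) * v + h (u, g) ⬝ᵥ g ≤ 0) :
    (∀ u : ℝ, μ u = deriv ψ u) ∧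
    (∀ (u : ℝ) (g : Fin 3 → ℝ), h (u, g) ⬝ᵥ g ≤ 0) := by
  refine ⟨fun u => ?_, fun u g => by simpa using hdiss u 0 g⟩
  have hzero : deriv ψ u - μ u = 0 := eq_zero_of_forall_mul_add_nonpos fun v => hdiss u v 0
  linarith

/-- Consistency with the dissipation inequality forces the chemical potential to be the
derivative of the free energy, and yields the residual inequality for the flux. -/
theorem dissipation_forces_state_equation_and_residual
    (ψ : ℝ → ℝ) (hψ : Differentiable ℝ ψ)
    (μ : ℝ → ℝ) (h : ℝ × (Fin 3 → ℝ) → Fin 3 → ℝ)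
    (hdiss : ∀ (u v : ℝ) (g : Fin 3 → ℝ),
      (deriv ψ u - μ u) * v + h (u, g) ⬝ᵥ g ≤ 0) :
    (∀ u : ℝ, μ u = deriv ψ u) ∧
    (∀ (u : ℝ) (g : Fin 3 → ℝ), h (u, g) ⬝ᵥ g ≤ 0) :=
  dissipation_forces_state_equation_and_residual_general ψ μ h hdiss
end

section
/- Let ĥ : ℝ × ℝ³ → ℝ³ be such that for each u ∈ ℝ the map g ↦ ĥ(u,g) is continuous, and suppose that ĥ(u,g)·g ≤ 0 for all u ∈ ℝ and g ∈ ℝ³. Then ĥ(u,0) = 0 for every u ∈ ℝ. (In words: if the gradient of chemical potential is null, then the flux of diffusant is null as well.) -/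
open Matrix Filter Topology

/-!
Testing the dissipation inequality along the ray `t • v` and dividing by `t > 0` gives
`ĥ(u, t • v) ⬝ᵥ v ≤ 0`; letting `t → 0⁺` yields `ĥ(u, 0) ⬝ᵥ v ≤ 0` for every `v`, and the
choice `v = ĥ(u, 0)` forces `ĥ(u, 0) = 0`.
-/

theorem Matrix.eq_zero_of_dotProduct_self_nonpos {n R : Type*} [Fintype n] [Ring R] [LinearOrder R]
    [IsStrictOrderedRing R] {v : n → R} (hv : v ⬝ᵥ v ≤ 0) : v = 0 :=
  dotProduct_self_eq_zero.mp <|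
    le_antisymm hv <| Finset.sum_nonneg fun i _ => mul_self_nonneg (v i)

section Dissipative

variable {ι : Type*} [Fintype ι] {f : (ι → ℝ) → ι → ℝ}

theorem dotProduct_nonpos_of_dissipative (hf : ContinuousAt f 0)
    (hdiss : ∀ g, f g ⬝ᵥ g ≤ 0) (v : ι → ℝ) : f 0 ⬝ᵥ v ≤ 0 := by
  have hray : Tendsto (fun t : ℝ => t • v) (𝓝[>] 0) (𝓝 0) := by
    simpa using (tendsto_id.smul_const v).mono_left (nhdsWithin_le_nhds (a := (0 : ℝ)))
  have hlim : Tendsto (fun t : ℝ => f (t • v) ⬝ᵥ v) (𝓝[>] 0) (𝓝 (f 0 ⬝ᵥ v)) :=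
    ((continuous_id.dotProduct continuous_const).tendsto _).comp (hf.tendsto.comp hray)
  refine le_of_tendsto hlim ?_
  filter_upwards [self_mem_nhdsWithin] with t (ht : 0 < t)
  have hscaled : t * (f (t • v) ⬝ᵥ v) ≤ 0 := by
    simpa only [dotProduct_smul, smul_eq_mul] using hdiss (t • v)
  exact nonpos_of_mul_nonpos_right hscaled ht

theorem eq_zero_at_zero_of_dissipative (hf : ContinuousAt f 0)
    (hdiss : ∀ g, f g ⬝ᵥ g ≤ 0) : f 0 = 0 :=
  eq_zero_of_dotProduct_self_nonpos (dotProduct_nonpos_of_dissipative hf hdiss (f 0))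

end Dissipative

/-- If the residual dissipation inequality holds and the flux mapping is continuous in the
chemical-potential gradient, then a null gradient implies a null flux. -/
theorem flux_vanishes_at_zero_gradient
    (h : ℝ × (Fin 3 → ℝ) → Fin 3 → ℝ)
    (hcont : ∀ u : ℝ, Continuous fun g : Fin 3 → ℝ => h (u, g))
    (hdiss : ∀ (u : ℝ) (g : Fin 3 → ℝ), h (u, g) ⬝ᵥ g ≤ 0) :
    ∀ u : ℝ, h (u, 0) = 0 := fun u =>
  eq_zero_at_zero_of_dissipative (hcont u).continuousAt (hdiss u)
end

section
/- Let ĥ : ℝ × ℝ³ → ℝ³ be such that for each u ∈ ℝ the map g ↦ ĥ(u,g) is continuously differentiable, ĥ(u,0) = 0 for all u, and ĥ(u,g)·g ≤ 0 for all u ∈ ℝ, g ∈ ℝ³. Then there exists a tensorial-mobility mapping M̂ : ℝ × ℝ³ → (3×3 real matrices), continuous in its second argument for each fixed u, such that ĥ(u,g) = −M̂(u,g) g for all u, g, and moreover (M̂(u,g) g)·g ≥ 0 for all u ∈ ℝ and g ∈ ℝ³. -/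
/-!
Hadamard's lemma: by the fundamental theorem of calculus along the segment from `0` to `g`,
`ĥ(u, g) = (∫₀¹ D_g ĥ(u, t g) dt) g`, and the averaged derivative depends continuously on `g`
because `D_g ĥ(u, ·)` is continuous. Taking `M̂(u, g)` to be minus its matrix, the sign
condition on `M̂` is the dissipation inequality `ĥ(u, g) ⬝ g ≤ 0` read through `ĥ = -M̂ g`.
-/

open Matrix

section Hadamard

variable {E F : Type*} [NormedAddCommGroup E] [NormedSpace ℝ E]
  [NormedAddCommGroup F] [NormedSpace ℝ F]

noncomputable def hadamardOperator (f : E → F) (x : E) : E →L[ℝ] F :=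
  ∫ t in (0 : ℝ)..1, fderiv ℝ f (t • x)

theorem continuous_hadamardOperator {f : E → F} (hf : ContDiff ℝ 1 f) :
    Continuous (hadamardOperator f) :=
  intervalIntegral.continuous_parametric_intervalIntegral_of_continuous'
    (f := fun x t => fderiv ℝ f (t • x))
    ((hf.continuous_fderiv one_ne_zero).comp (continuous_snd.smul continuous_fst)) 0 1

theorem hadamardOperator_apply_self [CompleteSpace F] {f : E → F} (hf : ContDiff ℝ 1 f) (x : E) :
    hadamardOperator f x x = f x - f 0 := by
  have hcont : Continuous fun t : ℝ => fderiv ℝ f (t • x) :=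
    (hf.continuous_fderiv one_ne_zero).comp (continuous_id.smul continuous_const)
  have hderiv : ∀ t ∈ Set.uIcc (0 : ℝ) 1,
      HasDerivAt (fun t : ℝ => f (t • x)) (fderiv ℝ f (t • x) x) t := fun t _ =>
    (hf.differentiable one_ne_zero _).hasFDerivAt.comp_hasDerivAt t
      (by simpa using (hasDerivAt_id t).smul_const x)
  rw [hadamardOperator, ContinuousLinearMap.intervalIntegral_apply (hcont.intervalIntegrable 0 1),
    intervalIntegral.integral_eq_sub_of_hasDerivAt hderiv
      ((hcont.clm_apply continuous_const).intervalIntegrable 0 1)]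
  simp

end Hadamard

theorem continuous_toMatrix'_coe {m n : Type*} [Fintype m] [Fintype n] [DecidableEq n] :
    Continuous fun A : (n → ℝ) →L[ℝ] (m → ℝ) => LinearMap.toMatrix' (A : (n → ℝ) →ₗ[ℝ] m → ℝ) :=
  (LinearMap.toMatrix'.toLinearMap ∘ₗ ContinuousLinearMap.coeLM ℝ).continuous_of_finiteDimensional

theorem exists_continuous_matrix_mulVec_eq {m n : Type*} [Fintype m] [Fintype n] [DecidableEq n]
    {f : (n → ℝ) → m → ℝ} (hf : ContDiff ℝ 1 f) (hf0 : f 0 = 0) :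
    ∃ A : (n → ℝ) → Matrix m n ℝ, Continuous A ∧ ∀ x, f x = A x *ᵥ x :=
  ⟨fun x => LinearMap.toMatrix' (hadamardOperator f x : (n → ℝ) →ₗ[ℝ] m → ℝ),
    continuous_toMatrix'_coe.comp (continuous_hadamardOperator hf), fun x => by
      rw [LinearMap.toMatrix'_mulVec, ContinuousLinearMap.coe_coe, hadamardOperator_apply_self hf,
        hf0, sub_zero]⟩

/-- Representation of the flux through a tensorial-mobility mapping:
`h(u,g) = -M(u,g) g` with `(M(u,g) g) ⬝ g ≥ 0`. -/
theorem flux_representation_tensorial_mobility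
    (h : ℝ × (Fin 3 → ℝ) → Fin 3 → ℝ)
    (hsmooth : ∀ u : ℝ, ContDiff ℝ 1 fun g : Fin 3 → ℝ => h (u, g))
    (hzero : ∀ u : ℝ, h (u, 0) = 0)
    (hdiss : ∀ (u : ℝ) (g : Fin 3 → ℝ), h (u, g) ⬝ᵥ g ≤ 0) :
    ∃ M : ℝ × (Fin 3 → ℝ) → Matrix (Fin 3) (Fin 3) ℝ,
      (∀ u : ℝ, Continuous fun g : Fin 3 → ℝ => M (u, g)) ∧
      (∀ (u : ℝ) (g : Fin 3 → ℝ), h (u, g) = -(M (u, g) *ᵥ g)) ∧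
      (∀ (u : ℝ) (g : Fin 3 → ℝ), 0 ≤ (M (u, g) *ᵥ g) ⬝ᵥ g) := by
  choose A hAcont hA using fun u => exists_continuous_matrix_mulVec_eq (hsmooth u) (hzero u)
  have hrep : ∀ u g, h (u, g) = -(-A u g *ᵥ g) := fun u g => by
    rw [neg_mulVec, neg_neg, hA]
  refine ⟨fun p => -A p.1 p.2, fun u => (hAcont u).neg, hrep, fun u g => ?_⟩
  have hdot := hdiss u g
  rwa [hrep, neg_dotProduct, neg_nonpos] at hdot
end

section
/- Let ψ̃ : ℝ × ℝ → ℝ be differentiable, let μ̃ : ℝ × ℝ → ℝ, and let h̃ : ℝ × ℝ × ℝ³ → ℝ³. Suppose the dissipation inequality (∂₁ψ̃(u,v) − μ̃(u,v))·v + h̃(u,v,g)·g + ∂₂ψ̃(u,v)·w ≤ 0 holds for all u, v, w ∈ ℝ and all g ∈ ℝ³. Then ∂₂ψ̃(u,v) = 0 for all u, v ∈ ℝ; consequently there exists a function ψ̂ : ℝ → ℝ such that ψ̃(u,v) = ψ̂(u) for all u, v ∈ ℝ (the free energy cannot depend on the rate). -/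
open Matrix

/-! Testing the dissipation inequality with `g = 0` leaves `a + ∂₂ψ̃(u,v) · w ≤ 0` for every `w`,
and an affine function of `w` bounded above must have zero slope. A function of two variables whose
partial derivative in the second one vanishes identically is constant in it, by the mean value
theorem. -/

theorem eq_zero_of_forall_add_mul_le {a b c : ℝ} (h : ∀ w, a + b * w ≤ c) : b = 0 := by
  by_contra hb
  have := h ((c - a + 1) / b)
  rw [mul_div_cancel₀ _ hb] at this
  linarith

theorem exists_eq_comp_fst_of_deriv_snd_eq_zero {α 𝕜 G : Type*} [RCLike 𝕜] [NormedAddCommGroup G]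
    [NormedSpace 𝕜 G] {f : α × 𝕜 → G} (hf : ∀ u, Differentiable 𝕜 fun s => f (u, s))
    (hf' : ∀ u v, deriv (fun s => f (u, s)) v = 0) :
    ∃ f₀ : α → G, ∀ u v, f (u, v) = f₀ u :=
  ⟨fun u => f (u, 0), fun u v => is_const_of_deriv_eq_zero (hf u) (hf' u) v 0⟩

/-- The dissipation inequality, required to hold for arbitrary continuations of a process,
forces the free energy to be independent of the concentration rate. -/
theorem free_energy_rate_independent
    (ψ : ℝ × ℝ → ℝ) (hψ : Differentiable ℝ ψ)
    (μ : ℝ × ℝ → ℝ) (h : ℝ × ℝ × (Fin 3 → ℝ) → Fin 3 → ℝ)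
    (hdiss : ∀ (u v w : ℝ) (g : Fin 3 → ℝ),
      (deriv (fun s => ψ (s, v)) u - μ (u, v)) * v + h (u, v, g) ⬝ᵥ g
        + deriv (fun s => ψ (u, s)) v * w ≤ 0) :
    (∀ u v : ℝ, deriv (fun s => ψ (u, s)) v = 0) ∧
    ∃ ψ0 : ℝ → ℝ, ∀ u v : ℝ, ψ (u, v) = ψ0 u := by
  have hrate : ∀ u v : ℝ, deriv (fun s => ψ (u, s)) v = 0 := fun u v =>
    eq_zero_of_forall_add_mul_le fun w => by
      simpa only [dotProduct_zero, add_zero] using hdiss u v w 0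
  have hψ_snd : ∀ u, Differentiable ℝ fun s => ψ (u, s) := fun u =>
    hψ.comp ((differentiable_const u).prodMk differentiable_id)
  exact ⟨hrate, exists_eq_comp_fst_of_deriv_snd_eq_zero hψ_snd hrate⟩
end

section
/- Let ψ̂ : ℝ → ℝ be differentiable and let μ̃ : ℝ × ℝ → ℝ be such that for each u ∈ ℝ the map v ↦ μ̃(u,v) is continuous. Suppose that (ψ̂'(u) − μ̃(u,v))·v ≤ 0 for all u, v ∈ ℝ. Then μ̃(u,0) = ψ̂'(u) for every u ∈ ℝ. -/
open Set

theorem eq_zero_of_mul_sub_nonpos {g : ℝ → ℝ} {a : ℝ} (hg : ContinuousAt g a)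
    (hsign : ∀ v, g v * (v - a) ≤ 0) : g a = 0 := by
  have right : g a ≤ 0 := by
    refine le_of_tendsto (hg.mono_left (nhdsWithin_le_nhds (s := Ioi a))) ?_
    filter_upwards [self_mem_nhdsWithin] with v (hv : a < v)
    exact nonpos_of_mul_nonpos_left (hsign v) (sub_pos.2 hv)
  have left : 0 ≤ g a := by
    refine ge_of_tendsto (hg.mono_left (nhdsWithin_le_nhds (s := Iio a))) ?_
    filter_upwards [self_mem_nhdsWithin] with v (hv : v < a)
    exact nonneg_of_mul_nonpos_left (hsign v) (sub_neg.2 hv)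
  exact le_antisymm right left

theorem chemical_potential_at_zero_rate_general
    (ψ : ℝ → ℝ)
    (μ : ℝ × ℝ → ℝ) (hcont : ∀ u : ℝ, Continuous fun v : ℝ => μ (u, v))
    (hdiss : ∀ u v : ℝ, (deriv ψ u - μ (u, v)) * v ≤ 0) :
    ∀ u : ℝ, μ (u, 0) = deriv ψ u := by
  intro u
  have hzero : deriv ψ u - μ (u, 0) = 0 :=
    eq_zero_of_mul_sub_nonpos (a := 0) (continuous_const.sub (hcont u)).continuousAt
      (by simpa using hdiss u)
  exact (sub_eq_zero.1 hzero).symm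

/-- The rate-dependent chemical potential reduces to the derivative of the coarse-grain
free energy at zero rate. -/
theorem chemical_potential_at_zero_rate
    (ψ : ℝ → ℝ) (hψ : Differentiable ℝ ψ)
    (μ : ℝ × ℝ → ℝ) (hcont : ∀ u : ℝ, Continuous fun v : ℝ => μ (u, v))
    (hdiss : ∀ u v : ℝ, (deriv ψ u - μ (u, v)) * v ≤ 0) :
    ∀ u : ℝ, μ (u, 0) = deriv ψ u :=
  chemical_potential_at_zero_rate_general ψ μ hcont hdiss
end

section
/- Let K > 0 and A > γ > 0. Let P : ℝ → ℝ be the projection onto the closed interval [−(A−γ), A−γ], i.e. P(x) = max(−(A−γ), min(A−γ, x)). Define v : [0,∞) → ℝ by v(s) = 0 for s ∈ [0, γ/(4A)] and v(s) = (1/K) · P( A z( s − γ/(4A) ) ) for s ≥ γ/(4A). Then v is locally Lipschitz, v(0) = 0, and v solves the rate-independent system driven by the zigzag datum: for almost every s ≥ 0, if v'(s) ≠ 0 then A z(s) = K v(s) + γ·(v'(s)/|v'(s)|), and if v'(s) = 0 then A z(s) − K v(s) ∈ [−γ, γ]. -/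
/-!
Write `δ = γ / (4 * A)`. For `s ≥ δ`, `K v(s)` is the clamp of `A z(s - δ)` to
`[-(A - γ), A - γ]`. Since `z` is `4`-Lipschitz, `A z(s)` and `A z(s - δ)` differ by at most
`4 A δ = γ`, and `|A z| ≤ A`, so `|A z - K v| ≤ γ` holds at every `s ≥ 0`. Where the clamp is
inactive, `s - δ` is closer than `1/4 - δ` to the centre of a monotone piece of `z`. Then `z` has
slope `±4` on all of `[s - δ, s]`, which gives `A z(s) = K v(s) ± γ` with the sign of `v'`.
Everywhere else `v` is locally constant, except at countably many points.
-/

open MeasureTheory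

/-- The 1-periodic zigzag function, equal on `[0,1)` to `4s` on `[0,1/4)`,
`2 - 4s` on `[1/4,3/4)` and `-4 + 4s` on `[3/4,1)`. -/
noncomputable def zigzag (s : ℝ) : ℝ :=
  if Int.fract s < 1 / 4 then 4 * Int.fract s
  else if Int.fract s < 3 / 4 then 2 - 4 * Int.fract s
  else -4 + 4 * Int.fract s

open Set Filter Topology

theorem zigzag_eq_of_rising {n : ℤ} {t : ℝ} (h₁ : n - 1 / 4 ≤ t) (h₂ : t ≤ n + 1 / 4) :
    zigzag t = 4 * (t - n) := by
  rcases lt_or_ge t n with ht | ht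
  · have hfract : Int.fract t = t - n + 1 := by
      rw [Int.fract_eq_iff]; refine ⟨by linarith, by linarith, n - 1, by push_cast; ring⟩
    rw [zigzag, hfract, if_neg (by linarith), if_neg (by linarith)]
    ring
  · have hfract : Int.fract t = t - n := by
      rw [Int.fract_eq_iff]; exact ⟨by linarith, by linarith, n, by ring⟩
    rcases lt_or_eq_of_le h₂ with h₂ | h₂
    · rw [zigzag, hfract, if_pos (by linarith)]
    · rw [zigzag, hfract, if_neg (by linarith), if_pos (by linarith)]
      linarith

theorem zigzag_eq_of_falling {n : ℤ} {t : ℝ} (h₁ : n + 1 / 4 ≤ t) (h₂ : t ≤ n + 3 / 4) :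
    zigzag t = 2 - 4 * (t - n) := by
  have hfract : Int.fract t = t - n := by
    rw [Int.fract_eq_iff]; exact ⟨by linarith, by linarith, n, by ring⟩
  rcases lt_or_eq_of_le h₂ with h₂ | h₂
  · rw [zigzag, hfract, if_neg (by linarith), if_pos (by linarith)]
  · rw [zigzag, hfract, if_neg (by linarith), if_neg (by linarith)]
    linarith

theorem zigzag_zero : zigzag 0 = 0 := by simp [zigzag]

theorem zigzag_eq_one_sub_abs_sub_round (t : ℝ) :
    zigzag t = 1 - 4 * |t - 1 / 4 - round (t - 1 / 4)| := by
  set n := round (t - 1 / 4)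
  have hn := abs_le.mp (abs_sub_round (t - 1 / 4))
  rcases le_total t (n + 1 / 4) with ht | ht
  · rw [zigzag_eq_of_rising (by linarith) ht, abs_of_nonpos (by linarith)]; ring
  · rw [zigzag_eq_of_falling ht (by linarith), abs_of_nonneg (by linarith)]; ring

theorem lipschitzWith_zigzag : LipschitzWith 4 zigzag := by
  have hround (x y : ℝ) : |x - round x| ≤ |y - round y| + |x - y| :=
    calc |x - round x| ≤ |x - round y| := round_le x _
      _ ≤ |y - round y| + |x - y| := by
          rw [show x - round y = (y - round y) + (x - y) by ring]; exact abs_add_le _ _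
  refine LipschitzWith.of_dist_le_mul fun x y => ?_
  have h₁ := hround (x - 1 / 4) (y - 1 / 4)
  have h₂ := hround (y - 1 / 4) (x - 1 / 4)
  rw [Real.dist_eq, Real.dist_eq, zigzag_eq_one_sub_abs_sub_round,
    zigzag_eq_one_sub_abs_sub_round, abs_le]
  rw [show x - 1 / 4 - (y - 1 / 4) = x - y by ring] at h₁
  rw [show y - 1 / 4 - (x - 1 / 4) = -(x - y) by ring, abs_neg] at h₂
  push_cast
  constructor <;> linarith

theorem abs_zigzag_le_one (t : ℝ) : |zigzag t| ≤ 1 := by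
  rw [zigzag_eq_one_sub_abs_sub_round, abs_le]
  have := abs_sub_round (t - 1 / 4)
  constructor <;> linarith [abs_nonneg (t - 1 / 4 - round (t - 1 / 4))]

theorem countable_setOf_abs_zigzag_eq (y : ℝ) : {t | |zigzag t| = y}.Countable := by
  have hsub : {t | |zigzag t| = y} ⊆
      ⋃ n : ℤ, ({n + y / 4, n - y / 4, n + (2 + y) / 4, n + (2 - y) / 4} : Set ℝ) := by
    intro t (ht : |zigzag t| = y)
    simp only [mem_iUnion, mem_insert_iff, mem_singleton_iff]
    refine ⟨round (t - 1 / 4), ?_⟩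
    rw [zigzag_eq_one_sub_abs_sub_round] at ht
    rcases abs_choice (1 - 4 * |t - 1 / 4 - round (t - 1 / 4)|) with h | h <;>
      rcases abs_choice (t - 1 / 4 - round (t - 1 / 4)) with h' | h' <;>
      rw [h, h'] at ht
    · right; right; right; linarith
    · left; linarith
    · right; right; left; linarith
    · right; left; linarith
  exact (countable_iUnion fun n => (toFinite _).countable).mono hsub

theorem countable_setOf_abs_mul_zigzag_sub_eq {a : ℝ} (ha : a ≠ 0) (b y : ℝ) :
    {s | |a * zigzag (s - b)| = y}.Countable := by
  refine ((countable_setOf_abs_zigzag_eq (y / |a|)).image (· + b)).mono fun s hs => ?_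
  refine ⟨s - b, ?_, sub_add_cancel _ _⟩
  rw [mem_ofPred_eq, eq_div_iff (abs_ne_zero.mpr ha), ← hs, abs_mul, mul_comm]

theorem exists_zigzag_eq_affine (t : ℝ) :
    ∃ σ m : ℝ, |σ| = 1 ∧ |t - m| ≤ 1 / 4 ∧ ∀ u, |u - m| ≤ 1 / 4 → zigzag u = 4 * σ * (u - m) := by
  set n := round (t - 1 / 4)
  have hn := abs_le.mp (abs_sub_round (t - 1 / 4))
  rcases le_total t (n + 1 / 4) with ht | ht
  · refine ⟨1, n, by norm_num, abs_le.mpr ⟨by linarith, by linarith⟩, fun u hu => ?_⟩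
    obtain ⟨hu₁, hu₂⟩ := abs_le.mp hu
    rw [zigzag_eq_of_rising (n := n) (by linarith) (by linarith)]; ring
  · refine ⟨-1, n + 1 / 2, by norm_num, abs_le.mpr ⟨by linarith, by linarith⟩, fun u hu => ?_⟩
    obtain ⟨hu₁, hu₂⟩ := abs_le.mp hu
    rw [zigzag_eq_of_falling (n := n) (by linarith) (by linarith)]; ring

def clampSymm (c x : ℝ) : ℝ := max (-c) (min c x)

theorem clampSymm_of_abs_le {c x : ℝ} (h : |x| ≤ c) : clampSymm c x = x := by
  obtain ⟨h₁, h₂⟩ := abs_le.mp h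
  rw [clampSymm, min_eq_right h₂, max_eq_right h₁]

theorem lipschitzWith_clampSymm (c : ℝ) : LipschitzWith 1 (clampSymm c) :=
  (LipschitzWith.id.const_min c).const_max (-c)

theorem clampSymm_eventuallyEq_const {c y : ℝ} (hc : 0 ≤ c) (h : c < |y|) :
    clampSymm c =ᶠ[𝓝 y] fun _ => clampSymm c y := by
  rcases lt_abs.mp h with h | h
  · filter_upwards [Ioi_mem_nhds h] with x (hx : c < x)
    rw [clampSymm, clampSymm, min_eq_left hx.le, min_eq_left h.le]
  · filter_upwards [Iio_mem_nhds (lt_neg.mp h)] with x (hx : x < -c)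
    rw [clampSymm, clampSymm, min_eq_right (by linarith), min_eq_right (by linarith),
      max_eq_left (by linarith), max_eq_left (by linarith)]

theorem abs_sub_clampSymm_le {c r w x : ℝ} (hx : |w - x| ≤ r) (hw : |w| ≤ c + r) :
    |w - clampSymm c x| ≤ r := by
  rw [abs_le] at hx hw ⊢
  rw [clampSymm]
  rcases min_cases c x with ⟨h₁, h₁'⟩ | ⟨h₁, h₁'⟩ <;> rw [h₁] <;>
    rcases max_cases (-c) (min c x) with ⟨h₂, h₂'⟩ | ⟨h₂, h₂'⟩ <;> rw [h₁] at h₂ h₂' <;>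
    rw [h₂] <;> constructor <;> linarith

/-- The paper's `v`, defined on all of `ℝ`: the `max (· - δ) 0` holds the datum at `z 0 = 0`
during the initial delay `s ≤ δ`. -/
noncomputable def playResponse (K γ A s : ℝ) : ℝ :=
  1 / K * clampSymm (A - γ) (A * zigzag (max (s - γ / (4 * A)) 0))

theorem playResponse_of_le {K γ A s : ℝ} (hγA : γ ≤ A) (hs : s ≤ γ / (4 * A)) :
    playResponse K γ A s = 0 := by
  rw [playResponse, max_eq_right (by linarith), zigzag_zero, mul_zero,
    clampSymm_of_abs_le (by simpa using hγA), mul_zero]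

theorem playResponse_of_ge {K γ A s : ℝ} (hs : γ / (4 * A) ≤ s) :
    playResponse K γ A s = 1 / K * clampSymm (A - γ) (A * zigzag (s - γ / (4 * A))) := by
  rw [playResponse, max_eq_left (by linarith)]

theorem lipschitzWith_playResponse (K γ A : ℝ) :
    LipschitzWith (4 * ‖A / K‖₊) (playResponse K γ A) := by
  rw [show 4 * ‖A / K‖₊ = ‖1 / K‖₊ * (1 * (‖A‖₊ * (4 * 1))) by
    rw [nnnorm_div, nnnorm_div, nnnorm_one]; ring]
  exact (lipschitzWith_smul (1 / K)).comp <| (lipschitzWith_clampSymm _).comp <|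
    (lipschitzWith_smul A).comp <| lipschitzWith_zigzag.comp <|
      (isometry_add_right _).lipschitz.max_const 0

theorem deriv_playResponse_of_lt {K γ A s : ℝ} (hγA : γ ≤ A) (hs : s < γ / (4 * A)) :
    deriv (playResponse K γ A) s = 0 := by
  have hev : playResponse K γ A =ᶠ[𝓝 s] fun _ => 0 := by
    filter_upwards [Iio_mem_nhds hs] with u hu using playResponse_of_le hγA hu.le
  rw [hev.deriv_eq, deriv_const]

theorem deriv_playResponse_of_saturated {K γ A s : ℝ} (hγA : γ ≤ A) (hs : γ / (4 * A) < s)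
    (hsat : A - γ < |A * zigzag (s - γ / (4 * A))|) :
    deriv (playResponse K γ A) s = 0 := by
  have hcont : ContinuousAt (fun u => A * zigzag (u - γ / (4 * A))) s :=
    (continuous_const.mul (lipschitzWith_zigzag.continuous.comp
      (continuous_sub_right _))).continuousAt
  have hev : playResponse K γ A =ᶠ[𝓝 s]
      fun _ => 1 / K * clampSymm (A - γ) (A * zigzag (s - γ / (4 * A))) := by
    filter_upwards [Ioi_mem_nhds hs,
      hcont.tendsto.eventually (clampSymm_eventuallyEq_const (by linarith) hsat)] with u hu hclamp
    rw [playResponse_of_ge hu.le, hclamp]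
  rw [hev.deriv_eq, deriv_const]

theorem playResponse_of_unsaturated {K γ A s : ℝ} (hK : K ≠ 0) (hγ : 0 ≤ γ) (hA : γ < A)
    (hs : γ / (4 * A) < s) (hunsat : |A * zigzag (s - γ / (4 * A))| < A - γ) :
    ∃ σ : ℝ, |σ| = 1 ∧ HasDerivAt (playResponse K γ A) (4 * A * σ / K) s ∧
      A * zigzag s = K * playResponse K γ A s + γ * σ := by
  set δ := γ / (4 * A) with hδ_def
  have hA₀ : 0 < A := by linarith
  have hδ : 4 * A * δ = γ := by rw [hδ_def]; field_simp
  have hδ₀ : 0 ≤ δ := by positivity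
  obtain ⟨σ, m, hσ, htm, hpiece⟩ := exists_zigzag_eq_affine (s - δ)
  have habs (u : ℝ) (hu : |u - δ - m| ≤ 1 / 4) : |A * zigzag (u - δ)| = 4 * A * |u - δ - m| := by
    rw [hpiece _ hu, abs_mul, abs_mul, abs_mul, hσ, abs_of_pos hA₀]; norm_num; ring
  have hsm : |s - δ - m| < 1 / 4 - δ := by
    have := habs s htm
    nlinarith
  have hev : playResponse K γ A =ᶠ[𝓝 s] fun u => 4 * A * σ / K * (u - δ - m) := by
    filter_upwards [Ioi_mem_nhds hs,
      (isOpen_lt (f := fun u => |u - δ - m|) (by fun_prop) continuous_const).mem_nhds hsm]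
      with u (hu : δ < u) (hum : |u - δ - m| < 1 / 4 - δ)
    have hum' : |u - δ - m| ≤ 1 / 4 := by linarith
    rw [playResponse_of_ge hu.le, clampSymm_of_abs_le (by rw [habs u hum']; nlinarith),
      hpiece _ hum']
    field_simp
  have hderiv : HasDerivAt (fun u => 4 * A * σ / K * (u - δ - m)) (4 * A * σ / K) s := by
    simpa using (((hasDerivAt_id s).sub_const δ).sub_const m).const_mul (4 * A * σ / K)
  refine ⟨σ, hσ, hderiv.congr_of_eventuallyEq hev, ?_⟩
  rw [hev.eq_of_nhds, hpiece s (by rw [abs_lt] at hsm; rw [abs_le]; constructor <;> linarith)]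
  field_simp
  linear_combination σ * hδ

theorem abs_mul_zigzag_sub_playResponse_le {K γ A s : ℝ} (hK : K ≠ 0) (hγ : 0 ≤ γ) (hA : γ < A)
    (hs : 0 ≤ s) : |A * zigzag s - K * playResponse K γ A s| ≤ γ := by
  set δ := γ / (4 * A) with hδ_def
  have hA₀ : 0 < A := by linarith
  have hδ : 4 * A * δ = γ := by rw [hδ_def]; field_simp
  have hδ₀ : 0 ≤ δ := by rw [hδ_def]; positivity
  rcases le_total s δ with hsδ | hsδ
  · rw [playResponse_of_le hA.le hsδ, mul_zero, sub_zero,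
      zigzag_eq_of_rising (n := 0) (by push_cast; linarith) (by push_cast; nlinarith)]
    rw [abs_le]; push_cast; constructor <;> nlinarith
  · rw [playResponse_of_ge hsδ, ← mul_assoc, mul_one_div_cancel hK, one_mul]
    refine abs_sub_clampSymm_le ?_ ?_
    · have hlip : |zigzag s - zigzag (s - δ)| ≤ 4 * δ := by
        simpa [Real.dist_eq, abs_of_nonneg hδ₀] using lipschitzWith_zigzag.dist_le_mul s (s - δ)
      calc |A * zigzag s - A * zigzag (s - δ)| = A * |zigzag s - zigzag (s - δ)| := by
            rw [← mul_sub, abs_mul, abs_of_pos hA₀]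
        _ ≤ A * (4 * δ) := by gcongr
        _ = γ := by linarith
    · rw [abs_mul, abs_of_pos hA₀, sub_add_cancel]
      nlinarith [abs_zigzag_le_one s]

def RateIndependentAt (K γ A : ℝ) (v : ℝ → ℝ) (s : ℝ) : Prop :=
  (deriv v s ≠ 0 → A * zigzag s = K * v s + γ * (deriv v s / |deriv v s|)) ∧
    (deriv v s = 0 → A * zigzag s - K * v s ∈ Icc (-γ) γ)

theorem RateIndependentAt.congr_of_eventuallyEq {K γ A s : ℝ} {v w : ℝ → ℝ}
    (h : RateIndependentAt K γ A w s) (hvw : v =ᶠ[𝓝 s] w) : RateIndependentAt K γ A v s := by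
  rwa [RateIndependentAt, hvw.deriv_eq, hvw.eq_of_nhds]

theorem rateIndependentAt_playResponse {K γ A s : ℝ} (hK : 0 < K) (hγ : 0 ≤ γ) (hA : γ < A)
    (hs : 0 < s) (hsδ : s ≠ γ / (4 * A)) (hlevel : |A * zigzag (s - γ / (4 * A))| ≠ A - γ) :
    RateIndependentAt K γ A (playResponse K γ A) s := by
  refine ⟨fun hderiv => ?_,
    fun _ => abs_le.mp (abs_mul_zigzag_sub_playResponse_le hK.ne' hγ hA hs.le)⟩
  rcases hsδ.lt_or_gt with hsδ | hsδ
  · exact absurd (deriv_playResponse_of_lt hA.le hsδ) hderiv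
  rcases hlevel.lt_or_gt with hunsat | hsat
  · obtain ⟨σ, hσ, hasDeriv, heq⟩ := playResponse_of_unsaturated hK.ne' hγ hA hsδ hunsat
    have hA₀ : 0 < A := by linarith
    have hslope : |4 * A * σ / K| = 4 * A / K := by
      rw [abs_div, abs_mul, hσ, abs_of_pos (by positivity), abs_of_pos hK, mul_one]
    rw [hasDeriv.deriv, heq, hslope]
    field_simp
  · exact absurd (deriv_playResponse_of_saturated hA.le hsδ hsat) hderiv

/-- For `A > γ`, the delayed and truncated (play-operator) response
`v(s) = (1/K) P(A z(s - γ/(4A)))` solves the rate-independent system driven by the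
zigzag boundary datum, exhibiting hysteresis. -/
theorem play_operator_solves_rate_independent_system
    (K γ A : ℝ) (hK : 0 < K) (hγ : 0 < γ) (hA : γ < A)
    (P : ℝ → ℝ) (hP : ∀ x : ℝ, P x = max (-(A - γ)) (min (A - γ) x))
    (v : ℝ → ℝ)
    (hv0 : ∀ s : ℝ, 0 ≤ s → s ≤ γ / (4 * A) → v s = 0)
    (hv1 : ∀ s : ℝ, γ / (4 * A) ≤ s → v s = (1 / K) * P (A * zigzag (s - γ / (4 * A)))) :
    LocallyLipschitzOn (Set.Ici 0) v ∧ v 0 = 0 ∧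
    ∀ᵐ s ∂(volume.restrict (Set.Ici (0 : ℝ))), DifferentiableAt ℝ v s →
      (deriv v s ≠ 0 → A * zigzag s = K * v s + γ * (deriv v s / |deriv v s|)) ∧
      (deriv v s = 0 → A * zigzag s - K * v s ∈ Set.Icc (-γ) γ) := by
  have hA₀ : 0 < A := hγ.trans hA
  obtain rfl : P = clampSymm (A - γ) := funext hP
  have hv : EqOn v (playResponse K γ A) (Ici 0) := fun s (hs : 0 ≤ s) => by
    rcases le_total s (γ / (4 * A)) with hsδ | hsδ
    · rw [hv0 s hs hsδ, playResponse_of_le hA.le hsδ]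
    · rw [hv1 s hsδ, playResponse_of_ge hsδ]
  refine ⟨?_, hv0 0 le_rfl (by positivity), ?_⟩
  · exact fun _ _ => ⟨_, Ici 0, self_mem_nhdsWithin, fun a ha b hb => by
      rw [hv ha, hv hb]; exact (lipschitzWith_playResponse K γ A).lipschitzOnWith ha hb⟩
  · have hexceptional :
        ({0, γ / (4 * A)} ∪ {s | |A * zigzag (s - γ / (4 * A))| = A - γ}).Countable :=
      (toFinite _).countable.union (countable_setOf_abs_mul_zigzag_sub_eq hA₀.ne' _ _)
    filter_upwards [ae_restrict_of_ae (hexceptional.ae_notMem volume),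
      ae_restrict_mem measurableSet_Ici] with s hs (hs₀ : 0 ≤ s) _
    simp only [mem_union, mem_insert_iff, mem_singleton_iff, mem_ofPred_eq, not_or] at hs
    obtain ⟨⟨hs0, hsδ⟩, hlevel⟩ := hs
    have hpos : 0 < s := lt_of_le_of_ne hs₀ (Ne.symm hs0)
    exact (rateIndependentAt_playResponse hK hγ.le hA hpos hsδ hlevel).congr_of_eventuallyEq
      (eventually_of_mem (Ioi_mem_nhds hpos) fun u (hu : 0 < u) => hv hu.le)
end
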